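/- arXiv:1106.0432 — 7 statements merged into one kernel-verified Lean document; each statement's English description precedes it below -/
import Mathlib

section
/- Let G be a group acting on a set X, and let A and B be nonempty subsets of X. If A and B are G-equidecomposable and A is G-paradoxical, then B is G-paradoxical. -/
open Pointwise

/-- Nonempty subsets `A` and `B` of a `G`-space `X` are `G`-equidecomposable if there are
finitely many group elements `g₁, …, gₙ` and partitions `A = A₁ ⊔ ⋯ ⊔ Aₙ`,
`B = B₁ ⊔ ⋯ ⊔ Bₙ` with `Aᵢ = gᵢ • Bᵢ` for all `i`. -/
def Equidecomposable (G : Type*) {X : Type*} [Group G] [MulAction G X]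
    (A B : Set X) : Prop :=
  ∃ (n : ℕ) (g : Fin n → G) (As Bs : Fin n → Set X),
    A = ⋃ i, As i ∧ B = ⋃ i, Bs i ∧
    (Pairwise fun i j => Disjoint (As i) (As j)) ∧
    (Pairwise fun i j => Disjoint (Bs i) (Bs j)) ∧
    ∀ i, As i = g i • Bs i

/-- A subset `E` of a `G`-space `X` is `G`-paradoxical if it contains disjoint subsets
`A` and `B`, each of which is `G`-equidecomposable with `E`. -/
def Paradoxical (G : Type*) {X : Type*} [Group G] [MulAction G X] (E : Set X) : Prop :=
  ∃ A B : Set X, A ⊆ E ∧ B ⊆ E ∧ Disjoint A B ∧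
    Equidecomposable G A E ∧ Equidecomposable G B E

lemma smul_disjoint_aux {G X : Type*} [Group G] [MulAction G X] (g : G) {s t : Set X}
    (h : Disjoint s t) : Disjoint (g • s) (g • t) := by
  rw [Set.disjoint_iff_inter_eq_empty] at h ⊢
  rw [← Set.smul_set_inter, h, Set.smul_set_empty]

lemma Equidecomposable.symm' {G X : Type*} [Group G] [MulAction G X] {A B : Set X}
    (h : Equidecomposable G A B) : Equidecomposable G B A := by
  obtain ⟨n, g, As, Bs, hA, hB, hdA, hdB, hAB⟩ := h
  exact ⟨n, fun i => (g i)⁻¹, Bs, As, hB, hA, hdB, hdA, fun i => by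
    rw [hAB i, inv_smul_smul]⟩

lemma Equidecomposable.trans' {G X : Type*} [Group G] [MulAction G X] {A B C : Set X}
    (h1 : Equidecomposable G A B) (h2 : Equidecomposable G B C) :
    Equidecomposable G A C := by
  obtain ⟨n, g, As, Bs, hA, hB, hdA, hdB, hAB⟩ := h1
  obtain ⟨m, h, Bs', Cs, hB', hC, hdB', hdC, hBC⟩ := h2
  have keyC : ∀ (i : Fin n) (j : Fin m), (h j)⁻¹ • (Bs i ∩ Bs' j) ⊆ Cs j := by
    intro i j
    refine (Set.smul_set_mono Set.inter_subset_right).trans ?_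
    rw [hBC j, inv_smul_smul]
  refine ⟨n * m,
    fun p => g (finProdFinEquiv.symm p).1 * h (finProdFinEquiv.symm p).2,
    fun p => g (finProdFinEquiv.symm p).1 •
      (Bs (finProdFinEquiv.symm p).1 ∩ Bs' (finProdFinEquiv.symm p).2),
    fun p => (h (finProdFinEquiv.symm p).2)⁻¹ •
      (Bs (finProdFinEquiv.symm p).1 ∩ Bs' (finProdFinEquiv.symm p).2),
    ?_, ?_, ?_, ?_, ?_⟩
  · rw [finProdFinEquiv.symm.surjective.iUnion_comp
      (g := fun q : Fin n × Fin m => g q.1 • (Bs q.1 ∩ Bs' q.2))]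
    rw [Set.iUnion_prod']
    have : ∀ i : Fin n, (⋃ j : Fin m, g i • (Bs i ∩ Bs' j)) = As i := by
      intro i
      rw [← Set.smul_set_iUnion, ← Set.inter_iUnion, ← hB']
      have hsub : Bs i ⊆ B := hB ▸ Set.subset_iUnion _ i
      rw [Set.inter_eq_self_of_subset_left hsub, ← hAB i]
    simp_rw [this]
    exact hA
  · rw [finProdFinEquiv.symm.surjective.iUnion_comp
      (g := fun q : Fin n × Fin m => (h q.2)⁻¹ • (Bs q.1 ∩ Bs' q.2))]
    rw [Set.iUnion_prod']
    rw [Set.iUnion_comm]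
    have : ∀ j : Fin m, (⋃ i : Fin n, (h j)⁻¹ • (Bs i ∩ Bs' j)) = Cs j := by
      intro j
      rw [← Set.smul_set_iUnion, ← Set.iUnion_inter, ← hB]
      have hsub : Bs' j ⊆ B := hB' ▸ Set.subset_iUnion _ j
      rw [Set.inter_eq_self_of_subset_right hsub, hBC j, inv_smul_smul]
    simp_rw [this]
    exact hC
  · intro p q hpq
    dsimp only
    by_cases hij : (finProdFinEquiv.symm p).1 = (finProdFinEquiv.symm q).1
    · have hjj : (finProdFinEquiv.symm p).2 ≠ (finProdFinEquiv.symm q).2 := by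
        intro hc
        exact hpq (finProdFinEquiv.symm.injective (Prod.ext hij hc))
      rw [hij]
      exact smul_disjoint_aux _ (Disjoint.mono Set.inter_subset_right
        Set.inter_subset_right (hdB' hjj))
    · refine Disjoint.mono ?_ ?_ (hdA hij)
      · rw [hAB]; exact Set.smul_set_mono Set.inter_subset_left
      · rw [hAB]; exact Set.smul_set_mono Set.inter_subset_left
  · intro p q hpq
    dsimp only
    by_cases hjj : (finProdFinEquiv.symm p).2 = (finProdFinEquiv.symm q).2
    · have hij : (finProdFinEquiv.symm p).1 ≠ (finProdFinEquiv.symm q).1 := by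
        intro hc
        exact hpq (finProdFinEquiv.symm.injective (Prod.ext hc hjj))
      rw [hjj]
      exact smul_disjoint_aux _ (Disjoint.mono Set.inter_subset_left
        Set.inter_subset_left (hdB hij))
    · exact Disjoint.mono (keyC _ _) (keyC _ _) (hdC hjj)
  · intro p
    rw [smul_smul, mul_assoc, mul_inv_cancel, mul_one]

/-- If nonempty subsets `A` and `B` of a `G`-space `X` are `G`-equidecomposable and `A` is
`G`-paradoxical, then `B` is `G`-paradoxical. -/
theorem paradoxical_of_equidecomposable {G X : Type*} [Group G] [MulAction G X]
    (A B : Set X) (hA : A.Nonempty) (hB : B.Nonempty)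
    (heq : Equidecomposable G A B) (hpar : Paradoxical G A) :
    Paradoxical G B := by
  obtain ⟨n, g, As, Bs, hAu, hBu, hdA, hdB, hAB⟩ := heq
  obtain ⟨A₁, A₂, hA₁, hA₂, hd, he₁, he₂⟩ := hpar
  -- the transported subsets of B
  set T : Set X → Set X := fun S => ⋃ i, (g i)⁻¹ • (As i ∩ S) with hT
  have hBsi : ∀ i, (g i)⁻¹ • As i = Bs i := fun i => by rw [hAB i, inv_smul_smul]
  have hTsub : ∀ S, T S ⊆ B := by
    intro S
    refine Set.iUnion_subset fun i => ?_
    refine (Set.smul_set_mono Set.inter_subset_left).trans ?_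
    rw [hBsi i]
    exact hBu ▸ Set.subset_iUnion _ i
  have hTequi : ∀ S, S ⊆ A → Equidecomposable G S (T S) := by
    intro S hS
    refine ⟨n, g, fun i => As i ∩ S, fun i => (g i)⁻¹ • (As i ∩ S), ?_, rfl, ?_, ?_, ?_⟩
    · rw [← Set.iUnion_inter, ← hAu, Set.inter_eq_self_of_subset_right hS]
    · intro i j hij
      exact Disjoint.mono Set.inter_subset_left Set.inter_subset_left (hdA hij)
    · intro i j hij
      have h1 : (g i)⁻¹ • (As i ∩ S) ⊆ Bs i :=
        (Set.smul_set_mono Set.inter_subset_left).trans (hBsi i).le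
      have h2 : (g j)⁻¹ • (As j ∩ S) ⊆ Bs j :=
        (Set.smul_set_mono Set.inter_subset_left).trans (hBsi j).le
      exact Disjoint.mono h1 h2 (hdB hij)
    · intro i
      rw [smul_inv_smul]
  have hTdisj : ∀ S₁ S₂, Disjoint S₁ S₂ → Disjoint (T S₁) (T S₂) := by
    intro S₁ S₂ hS
    rw [hT]
    simp only [Set.disjoint_iUnion_left, Set.disjoint_iUnion_right]
    intro i j
    by_cases hij : j = i
    · subst hij
      exact smul_disjoint_aux _ (Disjoint.mono Set.inter_subset_right
        Set.inter_subset_right hS)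
    · have h1 : (g j)⁻¹ • (As j ∩ S₁) ⊆ Bs j :=
        (Set.smul_set_mono Set.inter_subset_left).trans (hBsi j).le
      have h2 : (g i)⁻¹ • (As i ∩ S₂) ⊆ Bs i :=
        (Set.smul_set_mono Set.inter_subset_left).trans (hBsi i).le
      exact Disjoint.mono h1 h2 (hdB hij)
  have heq' : Equidecomposable G A B := ⟨n, g, As, Bs, hAu, hBu, hdA, hdB, hAB⟩
  refine ⟨T A₁, T A₂, hTsub A₁, hTsub A₂, hTdisj _ _ hd, ?_, ?_⟩
  · exact ((hTequi A₁ hA₁).symm').trans' (he₁.trans' heq')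
  · exact ((hTequi A₂ hA₂).symm').trans' (he₂.trans' heq')
end

section
/- Let G be a group that is G-paradoxical with respect to its action on itself by left translation, and suppose G acts freely on a nonempty set X (i.e., every non-identity element of G acts without fixed points). Then X is G-paradoxical. -/
open Pointwise

/-- Pulling back along an equivariant map preserves equidecomposability. -/
lemma equidecomposable_preimage {G X : Type*} [Group G] [MulAction G X]
    (σ : X → G) (hσ : ∀ (g : G) (x : X), σ (g • x) = g * σ x)
    {A B : Set G} (h : Equidecomposable G A B) :
    Equidecomposable G (σ ⁻¹' A) (σ ⁻¹' B) := by
  obtain ⟨n, g, As, Bs, hA, hB, hdA, hdB, hAB⟩ := h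
  have key : ∀ (c : G) (S : Set G), σ ⁻¹' (c • S) = c • (σ ⁻¹' S) := by
    intro c S
    ext x
    simp only [Set.mem_preimage, Set.mem_smul_set_iff_inv_smul_mem, smul_eq_mul]
    rw [← hσ]
  refine ⟨n, g, fun i => σ ⁻¹' (As i), fun i => σ ⁻¹' (Bs i), ?_, ?_, ?_, ?_, ?_⟩
  · rw [hA]; ext x; simp
  · rw [hB]; ext x; simp
  · intro i j hij
    exact (hdA hij).preimage σ
  · intro i j hij
    exact (hdB hij).preimage σ
  · intro i
    show σ ⁻¹' As i = g i • (σ ⁻¹' Bs i)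
    rw [hAB i, key]

/-- If `G` is paradoxical with respect to its action on itself by left translation, and `G`
acts freely on a nonempty set `X` (no non-identity element has a fixed point), then `X` is
`G`-paradoxical. -/
theorem paradoxical_of_free_action {G X : Type*} [Group G] [MulAction G X] [Nonempty X]
    (hG : Paradoxical G (Set.univ : Set G))
    (hfree : ∀ (g : G) (x : X), g • x = x → g = 1) :
    Paradoxical G (Set.univ : Set X) := by
  classical
  letI s : Setoid X := MulAction.orbitRel G X
  set rep : X → X := fun x => Quotient.out (Quotient.mk s x) with hrep_def
  have hex : ∀ x : X, ∃ g : G, g • rep x = x := by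
    intro x
    have h : s.r (rep x) x := Quotient.exact (Quotient.out_eq (Quotient.mk s x))
    have h' : rep x ∈ MulAction.orbit G x := h
    obtain ⟨g, hg⟩ := h'
    exact ⟨g⁻¹, by rw [← hg]; simp⟩
  set σ : X → G := fun x => Classical.choose (hex x) with hσ_def
  have hσ_spec : ∀ x : X, σ x • rep x = x := fun x => Classical.choose_spec (hex x)
  have huniq : ∀ (a b : G) (x : X), a • rep x = b • rep x → a = b := by
    intro a b x h
    have : (b⁻¹ * a) • rep x = rep x := by rw [mul_smul, h]; simp
    have h1 := hfree _ _ this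
    exact (inv_mul_eq_one.mp h1).symm
  have hrep_smul : ∀ (g : G) (x : X), rep (g • x) = rep x := by
    intro g x
    have : Quotient.mk s (g • x) = Quotient.mk s x :=
      Quotient.sound (⟨g, rfl⟩ : (g • x) ∈ MulAction.orbit G x)
    simp only [hrep_def, this]
  have hσ : ∀ (g : G) (x : X), σ (g • x) = g * σ x := by
    intro g x
    apply huniq _ _ x
    have h1 : σ (g • x) • rep (g • x) = g • x := hσ_spec (g • x)
    rw [hrep_smul] at h1
    rw [h1, mul_smul, hσ_spec]
  obtain ⟨A, B, _, _, hdisj, hAeq, hBeq⟩ := hG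
  refine ⟨σ ⁻¹' A, σ ⁻¹' B, Set.subset_univ _, Set.subset_univ _,
    hdisj.preimage σ, ?_, ?_⟩
  · have := equidecomposable_preimage σ hσ hAeq
    simpa using this
  · have := equidecomposable_preimage σ hσ hBeq
    simpa using this
end

section
/- The free group F_2 of rank two, acting on itself by left translation, is F_2-paradoxical. -/
open Pointwise

/-!
Write `W(l)` (`FreeGroup.startsWith l`) for the set of elements whose reduced word starts with
the letter `l`. Left multiplication by a generator `x` maps `W(x⁻¹)` onto the complement of
`W(x)`: cancelling the leading `x⁻¹` of a reduced word cannot expose an `x`, and any word not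
starting with `x` gets `x` prepended. Hence `W(x) ⊔ W(x⁻¹)` is equidecomposable with the whole
group via the two pieces `W(x) = 1 • W(x)` and `W(x⁻¹) = x⁻¹ • W(x)ᶜ`. Two distinct generators
give two disjoint such sets.
-/

open Set Function

section Equidecomposable

variable {G X : Type*} [Group G] [MulAction G X]

theorem equidecomposable_iUnion {ι : Type*} [Finite ι] (g : ι → G) {As Bs : ι → Set X}
    (hA : Pairwise (Disjoint on As)) (hB : Pairwise (Disjoint on Bs))
    (h : ∀ i, As i = g i • Bs i) :
    Equidecomposable G (⋃ i, As i) (⋃ i, Bs i) := by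
  obtain ⟨n, ⟨e⟩⟩ := Finite.exists_equiv_fin ι
  exact ⟨n, g ∘ e.symm, As ∘ e.symm, Bs ∘ e.symm,
    (e.symm.surjective.iUnion_comp As).symm, (e.symm.surjective.iUnion_comp Bs).symm,
    hA.comp_of_injective e.symm.injective, hB.comp_of_injective e.symm.injective,
    fun i => h (e.symm i)⟩

theorem equidecomposable_union {A₁ A₂ B₁ B₂ : Set X} (g₁ g₂ : G)
    (hA : Disjoint A₁ A₂) (hB : Disjoint B₁ B₂) (h₁ : A₁ = g₁ • B₁) (h₂ : A₂ = g₂ • B₂) :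
    Equidecomposable G (A₁ ∪ A₂) (B₁ ∪ B₂) := by
  rw [union_eq_iUnion, union_eq_iUnion]
  exact equidecomposable_iUnion (fun b => cond b g₁ g₂) (pairwise_disjoint_on_bool.2 hA)
    (pairwise_disjoint_on_bool.2 hB) (Bool.forall_bool.2 ⟨h₂, h₁⟩)

end Equidecomposable

namespace FreeGroup

variable {α : Type*} [DecidableEq α]

theorem mem_startsWith_iff {l : α × Bool} {g : FreeGroup α} :
    g ∈ startsWith l ↔ ∃ t, g.toWord = l :: t := by
  rw [startsWith, mem_ofPred_eq, ← List.head?_eq_getElem?, List.head?_eq_some_iff]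

theorem mk_mul_notMem_startsWith {x : α} {b : Bool} {g : FreeGroup α}
    (hg : g ∈ startsWith (x, !b)) : mk [(x, b)] * g ∉ startsWith (x, b) := by
  obtain ⟨t, ht⟩ := mem_startsWith_iff.1 hg
  have hred : IsReduced ((x, !b) :: t) := ht ▸ isReduced_toWord
  have hcancel : (mk [(x, b)] * g).toWord = t := by
    rw [toWord_mul, toWord_mk, reduce_singleton, ht, List.singleton_append,
      reduce.Step.eq Red.Step.cons_not, (hred.infix (List.suffix_cons _ _).isInfix).reduce_eq]
  intro hmem
  obtain ⟨s, rfl⟩ := hcancel ▸ mem_startsWith_iff.1 hmem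
  simpa using (isReduced_cons_cons.1 hred).1

theorem mk_singleton_smul_startsWith (x : α) (b : Bool) :
    mk [(x, b)] • startsWith (x, !b) = (startsWith (x, b))ᶜ := by
  have hinv : (mk [(x, b)])⁻¹ = mk [(x, !b)] := by simp [inv_mk, invRev]
  refine Subset.antisymm ?_ fun g hg => ⟨(mk [(x, b)])⁻¹ * g, ?_, mul_inv_cancel_left _ _⟩
  · rintro _ ⟨g, hg, rfl⟩
    exact mk_mul_notMem_startsWith hg
  · rw [hinv]
    exact startsWith_mk_mul g (by simpa using hg)

theorem equidecomposable_startsWith_union_univ (x : α) :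
    Equidecomposable (FreeGroup α) (startsWith (x, true) ∪ startsWith (x, false)) univ := by
  rw [← union_compl_self (startsWith (x, true))]
  refine equidecomposable_union 1 (mk [(x, true)])⁻¹ (startsWith.disjoint_iff_ne.2 (by simp))
    disjoint_compl_right (one_smul _ _).symm ?_
  rw [← mk_singleton_smul_startsWith, inv_smul_smul, Bool.not_true]

end FreeGroup

theorem FreeGroup.paradoxical_univ {α : Type*} {x y : α} (hxy : x ≠ y) :
    Paradoxical (FreeGroup α) (univ : Set (FreeGroup α)) := by
  classical
  refine ⟨_, _, subset_univ _, subset_univ _, ?_, equidecomposable_startsWith_union_univ x,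
    equidecomposable_startsWith_union_univ y⟩
  simp [disjoint_union_left, disjoint_union_right, hxy]

/-- The free group of rank two, acting on itself by left translation, is paradoxical. -/
theorem freeGroup_paradoxical :
    Paradoxical (FreeGroup Bool) (Set.univ : Set (FreeGroup Bool)) :=
  FreeGroup.paradoxical_univ (x := true) (y := false) (by decide)
end

section
/- The subgroup H of SO(3) generated by the two rotation matrices A = [[1/3, −2√2/3, 0], [2√2/3, 1/3, 0], [0, 0, 1]] and B = [[1, 0, 0], [0, 1/3, −2√2/3], [0, 2√2/3, 1/3]] is a free group of rank 2; equivalently, A and B satisfy no nontrivial reduced relation, so H is isomorphic to the free group F_2 on two generators. -/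
open Pointwise Matrix

set_option synthInstance.maxHeartbeats 1000000
set_option maxHeartbeats 1000000

/-- The unitary/orthogonal group acts on vectors by matrix multiplication. -/
instance unitarySMulVec {n : ℕ} {K : Type*} [CommRing K] [StarRing K] :
    MulAction (Matrix.unitaryGroup (Fin n) K) (Fin n → K) where
  smul g v := (g : Matrix (Fin n) (Fin n) K).mulVec v
  one_smul v := by
    show (1 : Matrix.unitaryGroup (Fin n) K).1.mulVec v = v
    simp
  mul_smul g h v := by
    show (g * h : Matrix.unitaryGroup (Fin n) K).1.mulVec v
        = g.1.mulVec (h.1.mulVec v)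
    simp [Matrix.mulVec_mulVec]

/-- `SO(n)`, the special orthogonal group, as a subgroup of the orthogonal group. -/
def SO (n : ℕ) : Subgroup (Matrix.orthogonalGroup (Fin n) ℝ) where
  carrier := {g | (g : Matrix (Fin n) (Fin n) ℝ).det = 1}
  one_mem' := by simp
  mul_mem' := by
    intro a b ha hb
    simp only [Set.mem_setOf_eq] at *
    rw [Matrix.UnitaryGroup.mul_val, Matrix.det_mul, ha, hb, mul_one]
  inv_mem' := by
    intro a ha
    simp only [Set.mem_setOf_eq] at *
    have h : ((a : Matrix (Fin n) (Fin n) ℝ) * ((a⁻¹ : Matrix.orthogonalGroup (Fin n) ℝ) :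
        Matrix (Fin n) (Fin n) ℝ)).det = 1 := by
      rw [← Matrix.UnitaryGroup.mul_val, mul_inv_cancel]
      simp
    rw [Matrix.det_mul, ha, one_mul] at h
    exact h

noncomputable def matA : Matrix (Fin 3) (Fin 3) ℝ :=
  !![1/3, -(2*Real.sqrt 2)/3, 0;
     (2*Real.sqrt 2)/3, 1/3, 0;
     0, 0, 1]

noncomputable def matB : Matrix (Fin 3) (Fin 3) ℝ :=
  !![1, 0, 0;
     0, 1/3, -(2*Real.sqrt 2)/3;
     0, (2*Real.sqrt 2)/3, 1/3]

lemma sqrt_two_mul_self : Real.sqrt 2 * Real.sqrt 2 = 2 := Real.mul_self_sqrt (by norm_num)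

lemma matA_mem : matA ∈ Matrix.orthogonalGroup (Fin 3) ℝ := by
  rw [Matrix.mem_orthogonalGroup_iff]
  ext i j
  fin_cases i <;> fin_cases j <;>
    simp [matA, Matrix.mul_apply, Fin.sum_univ_three, Matrix.conjTranspose_apply] <;>
    nlinarith [sqrt_two_mul_self]

lemma matB_mem : matB ∈ Matrix.orthogonalGroup (Fin 3) ℝ := by
  rw [Matrix.mem_orthogonalGroup_iff]
  ext i j
  fin_cases i <;> fin_cases j <;>
    simp [matB, Matrix.mul_apply, Fin.sum_univ_three, Matrix.conjTranspose_apply] <;>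
    nlinarith [sqrt_two_mul_self]

lemma matA_det : matA.det = 1 := by
  simp [matA, Matrix.det_fin_three]
  nlinarith [sqrt_two_mul_self]

lemma matB_det : matB.det = 1 := by
  simp [matB, Matrix.det_fin_three]
  nlinarith [sqrt_two_mul_self]

/-- The rotation `A` as an element of `SO(3)`. -/
noncomputable def soA : SO 3 := ⟨⟨matA, matA_mem⟩, matA_det⟩

/-- The rotation `B` as an element of `SO(3)`. -/
noncomputable def soB : SO 3 := ⟨⟨matB, matB_mem⟩, matB_det⟩


/-!
Conjugating by `D = diag(1, √2, 1)` turns `3A^{±1}` and `3B^{±1}` into integer matrices. Mod 3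
each of them has rank one, and the one for a letter `x` maps the image line of the one for `y`
onto its own image line unless `y = x⁻¹`: a ping-pong on four lines of `(ZMod 3)³`. So for a
nonempty reduced word `w` of length `n` the integer matrix `3ⁿ D⁻¹ w(A, B) D` is nonzero mod 3,
whereas a relation `w(A, B) = 1` would make it `3ⁿ • 1 ≡ 0`.
-/

theorem List.IsChain.prod_smul_mem {ι G α : Type*} [Monoid G] [MulAction G α] {g : ι → G}
    {r : ι → ι → Prop} {X : ι → Set α} {a : α} (ha : ∀ i, g i • a ∈ X i)
    (hX : ∀ i j, r i j → ∀ b ∈ X j, g i • b ∈ X i) :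
    ∀ {i : ι} {l : List ι}, (i :: l).IsChain r → ((i :: l).map g).prod • a ∈ X i
  | i, [], _ => by simpa using ha i
  | i, j :: l, h => by
    rw [List.isChain_cons_cons] at h
    rw [List.map_cons, List.prod_cons, mul_smul]
    exact hX i j h.1 _ (prod_smul_mem ha hX h.2)

namespace SO3Free

noncomputable def generator (b : Bool) : SO 3 := if b then soA else soB

noncomputable def toMatrix : SO 3 →* Matrix (Fin 3) (Fin 3) ℝ :=
  (Matrix.orthogonalGroup (Fin 3) ℝ).subtype.comp (SO 3).subtype

/-- As in `FreeGroup.toWord`, `(b, true)` stands for `generator b`, `(b, false)` for its inverse. -/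
noncomputable def letterMatrix (x : Bool × Bool) : Matrix (Fin 3) (Fin 3) ℝ :=
  toMatrix (cond x.2 (generator x.1) (generator x.1)⁻¹)

def intMatrix : Bool × Bool → Matrix (Fin 3) (Fin 3) ℤ
  | (true, true) => !![1, -4, 0; 2, 1, 0; 0, 0, 3]
  | (true, false) => !![1, 4, 0; -2, 1, 0; 0, 0, 3]
  | (false, true) => !![3, 0, 0; 0, 1, -2; 0, 4, 1]
  | (false, false) => !![3, 0, 0; 0, 1, 2; 0, -4, 1]

noncomputable def diagSqrtTwo : Matrix (Fin 3) (Fin 3) ℝ := diagonal ![1, √2, 1]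

lemma toMatrix_lift_mk (L : List (Bool × Bool)) :
    toMatrix (FreeGroup.lift generator (FreeGroup.mk L)) = (L.map letterMatrix).prod := by
  rw [FreeGroup.lift_mk, map_list_prod, List.map_map]
  rfl

lemma diagSqrtTwo_mul_intMatrix (x : Bool × Bool) :
    diagSqrtTwo * (Int.castRingHom ℝ).mapMatrix (intMatrix x) =
      (3 : ℝ) • letterMatrix x * diagSqrtTwo := by
  have := sqrt_two_mul_self
  rcases x with ⟨_ | _, _ | _⟩ <;> ext i j <;> fin_cases i <;> fin_cases j <;>
    simp [diagSqrtTwo, letterMatrix, toMatrix, generator, intMatrix, soA, soB, matA, matB,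
      diagonal_mul, mul_diagonal, star_eq_conjTranspose, transpose_apply] <;> linarith

lemma diagSqrtTwo_mul_prod_intMatrix (l : List (Bool × Bool)) :
    diagSqrtTwo * (Int.castRingHom ℝ).mapMatrix (l.map intMatrix).prod =
      (3 : ℝ) ^ l.length • (l.map letterMatrix).prod * diagSqrtTwo := by
  induction l with
  | nil => simp
  | cons x l ih =>
    calc diagSqrtTwo * (Int.castRingHom ℝ).mapMatrix ((x :: l).map intMatrix).prod
        = diagSqrtTwo * (Int.castRingHom ℝ).mapMatrix (intMatrix x) *
            (Int.castRingHom ℝ).mapMatrix (l.map intMatrix).prod := by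
          rw [List.map_cons, List.prod_cons, map_mul, mul_assoc]
      _ = (3 : ℝ) • letterMatrix x *
            ((3 : ℝ) ^ l.length • (l.map letterMatrix).prod * diagSqrtTwo) := by
          rw [diagSqrtTwo_mul_intMatrix, mul_assoc, ih]
      _ = _ := by
          simp only [List.map_cons, List.prod_cons, List.length_cons, smul_mul_assoc,
            mul_smul_comm, smul_smul, pow_succ, mul_assoc]

lemma isUnit_diagSqrtTwo : IsUnit diagSqrtTwo := by
  rw [isUnit_iff_isUnit_det, diagSqrtTwo, det_diagonal, Fin.prod_univ_three, isUnit_iff_ne_zero]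
  simp

lemma prod_intMatrix_eq_of_prod_letterMatrix_eq_one {l : List (Bool × Bool)}
    (hl : (l.map letterMatrix).prod = 1) : (l.map intMatrix).prod = (3 : ℤ) ^ l.length • 1 := by
  apply Matrix.map_injective (f := (Int.cast : ℤ → ℝ)) Int.cast_injective
  apply isUnit_diagSqrtTwo.mul_left_cancel
  change diagSqrtTwo * (Int.castRingHom ℝ).mapMatrix _ =
    diagSqrtTwo * (Int.castRingHom ℝ).mapMatrix _
  rw [diagSqrtTwo_mul_prod_intMatrix, hl, map_zsmul, map_one, mul_smul_comm, mul_one,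
    smul_mul_assoc, one_mul, ← Int.cast_smul_eq_zsmul ℝ]
  push_cast
  rfl

/-- Mod 3, `intMatrix x` has rank one and its image is spanned by `axisMod3 x`. -/
def axisMod3 : Bool × Bool → Fin 3 → ZMod 3
  | (true, true) => ![1, -1, 0]
  | (true, false) => ![1, 1, 0]
  | (false, true) => ![0, 1, 1]
  | (false, false) => ![0, 1, -1]

lemma axisMod3_ne_zero : ∀ x, axisMod3 x ≠ 0 := by decide

lemma exists_mulVec_one_zero_one : ∀ x : Bool × Bool, ∃ c : ZMod 3, c ≠ 0 ∧
    (Int.castRingHom (ZMod 3)).mapMatrix (intMatrix x) *ᵥ ![1, 0, 1] = c • axisMod3 x := by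
  decide

lemma exists_mulVec_axisMod3 : ∀ x y : Bool × Bool, (x.1 = y.1 → x.2 = y.2) → ∃ c : ZMod 3,
    c ≠ 0 ∧ (Int.castRingHom (ZMod 3)).mapMatrix (intMatrix x) *ᵥ axisMod3 y =
      c • axisMod3 x := by
  decide

def pingPongSet (x : Bool × Bool) : Set (Fin 3 → ZMod 3) :=
  {u | ∃ c : ZMod 3, c ≠ 0 ∧ u = c • axisMod3 x}

lemma prod_intMatrix_mod_three_ne_zero {l : List (Bool × Bool)}
    (hl : FreeGroup.IsReduced l) (hne : l ≠ []) :
    (Int.castRingHom (ZMod 3)).mapMatrix (l.map intMatrix).prod ≠ 0 := by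
  obtain ⟨x, t, rfl⟩ := List.exists_cons_of_ne_nil hne
  let reduce : Bool × Bool → Module.End (ZMod 3) (Fin 3 → ZMod 3) := fun y =>
    toLinAlgEquiv' ((Int.castRingHom (ZMod 3)).mapMatrix (intMatrix y))
  have hmem : ((x :: t).map reduce).prod • ![1, 0, 1] ∈ pingPongSet x := by
    refine List.IsChain.prod_smul_mem (fun y => ?_) ?_ hl
    · simpa [reduce, pingPongSet, eq_comm] using exists_mulVec_one_zero_one y
    rintro y z hyz _ ⟨c, hc, rfl⟩
    obtain ⟨d, hd, h⟩ := exists_mulVec_axisMod3 y z hyz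
    exact ⟨c * d, mul_ne_zero hc hd, by
      rw [Module.End.smul_def, toLinAlgEquiv'_apply, mulVec_smul, h, smul_smul]⟩
  have hprod : ((x :: t).map reduce).prod =
      toLinAlgEquiv' ((Int.castRingHom (ZMod 3)).mapMatrix ((x :: t).map intMatrix).prod) := by
    simp only [reduce, map_list_prod, List.map_map]
    rfl
  intro h0
  obtain ⟨c, hc, h⟩ := hmem
  rw [hprod, h0, map_zero, zero_smul, eq_comm, smul_eq_zero] at h
  exact h.elim hc (axisMod3_ne_zero x)

lemma prod_letterMatrix_ne_one {l : List (Bool × Bool)} (hl : FreeGroup.IsReduced l)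
    (hne : l ≠ []) : (l.map letterMatrix).prod ≠ 1 := by
  intro hrot
  apply prod_intMatrix_mod_three_ne_zero hl hne
  have hlen : l.length ≠ 0 := by simpa using hne
  rw [prod_intMatrix_eq_of_prod_letterMatrix_eq_one hrot, map_zsmul,
    ← Int.cast_smul_eq_zsmul (ZMod 3)]
  simp [hlen, show (3 : ZMod 3) = 0 from rfl]

end SO3Free

/-- The subgroup of `SO(3)` generated by the rotations `A` and `B` is free of rank two:
the canonical homomorphism from the free group on two generators to `SO(3)` sending the
generators to `A` and `B` is injective. -/
theorem so3_free_subgroup :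
    Function.Injective
      (FreeGroup.lift (fun b : Bool => if b then soA else soB) : FreeGroup Bool →* SO 3) := by
  refine (injective_iff_map_eq_one _).2 fun w hw => FreeGroup.toWord_eq_nil_iff.1 ?_
  by_contra hne
  apply SO3Free.prod_letterMatrix_ne_one FreeGroup.isReduced_toWord hne
  rw [← SO3Free.toMatrix_lift_mk, FreeGroup.mk_toWord]
  exact (congrArg SO3Free.toMatrix hw).trans (map_one _)
end

section
/- Let H be the subgroup of SO(3) generated by the matrices A = [[1/3, −2√2/3, 0], [2√2/3, 1/3, 0], [0, 0, 1]] and B = [[1, 0, 0], [0, 1/3, −2√2/3], [0, 2√2/3, 1/3]], and let D ⊆ S² be the set of all points of the unit sphere S² fixed by some non-identity element of H (the union over g ∈ H \ {id} of the intersections of the rotation axis of g with S²). Then S² \ D is SO(3)-paradoxical. -/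
/-! The rotations `A` and `B` generate a free group: conjugated by `diag(1, √2, 1)`, the matrices
`3A^{±1}`, `3B^{±1}` have integer entries, and modulo 3 they are rank one matrices `ℓ ℓᵀ` whose
axes satisfy `ℓ_x ⬝ ℓ_y ≠ 0` unless `y = x⁻¹`. Hence a nontrivial reduced word of length `n`
yields an integer matrix that is nonzero modulo 3, whereas a word acting trivially would yield
`3ⁿ • 1`.

A free group of rank two is paradoxical, since `W(a) ∪ a W(a⁻¹)` is the whole group, where
`W(x)` is the set of reduced words beginning with `x`. By construction `H` acts freely on
`S² \ D`; choosing a point in each orbit gives an `H`-equivariant map `S² \ D → H`, along which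
the paradoxical decomposition of `H` pulls back. -/

open Pointwise Matrix

set_option synthInstance.maxHeartbeats 1000000
set_option maxHeartbeats 1000000

/-- The `n`-dimensional unit sphere `Sⁿ = {x ∈ ℝⁿ⁺¹ : x₁² + ⋯ + x_{n+1}² = 1}`. -/
def SphereSet (n : ℕ) : Set (Fin (n + 1) → ℝ) := {x | ∑ i, x i ^ 2 = 1}

/-- The subgroup `H` of `SO(3)` generated by the rotations `A` and `B`. -/
noncomputable def Hsub : Subgroup (SO 3) := Subgroup.closure {soA, soB}

/-- The set `D` of points of `S²` fixed by some non-identity element of `H`. -/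
def fixedPointSet : Set (Fin 3 → ℝ) :=
  {x | x ∈ SphereSet 2 ∧ ∃ g ∈ Hsub, g ≠ 1 ∧ g • x = x}

open Set Function

namespace Equidecomposable

theorem image {H G Y X : Type*} [Group H] [Group G] [MulAction H Y] [MulAction G X]
    {φ : H → G} (f : Y →ₑ[φ] X) (hf : Injective f) {A B : Set Y}
    (h : Equidecomposable H A B) : Equidecomposable G (f '' A) (f '' B) := by
  obtain ⟨n, g, As, Bs, rfl, rfl, hAs, hBs, hsmul⟩ := h
  refine ⟨n, φ ∘ g, fun i => f '' As i, fun i => f '' Bs i, image_iUnion, image_iUnion,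
    fun i j hij => (disjoint_image_iff hf).mpr (hAs hij),
    fun i j hij => (disjoint_image_iff hf).mpr (hBs hij), fun i => ?_⟩
  change f '' As i = φ (g i) • f '' Bs i
  rw [hsmul, image_smul_setₛₗ]

theorem preimage {G Y Z : Type*} [Group G] [MulAction G Y] [MulAction G Z]
    (f : Y →[G] Z) {A B : Set Z} (h : Equidecomposable G A B) :
    Equidecomposable G (f ⁻¹' A) (f ⁻¹' B) := by
  obtain ⟨n, g, As, Bs, rfl, rfl, hAs, hBs, hsmul⟩ := h
  refine ⟨n, g, fun i => f ⁻¹' As i, fun i => f ⁻¹' Bs i, preimage_iUnion, preimage_iUnion,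
    fun i j hij => (hAs hij).preimage f, fun i j hij => (hBs hij).preimage f, fun i => ?_⟩
  change f ⁻¹' As i = g i • f ⁻¹' Bs i
  rw [hsmul]
  exact Group.preimage_smul_setₛₗ id f (g i) (Bs i)

theorem union_of_eq_smul {G X : Type*} [Group G] [MulAction G X] {A₁ A₂ B₁ B₂ : Set X}
    (hA : Disjoint A₁ A₂) (hB : Disjoint B₁ B₂) {g₁ g₂ : G} (h₁ : A₁ = g₁ • B₁)
    (h₂ : A₂ = g₂ • B₂) : Equidecomposable G (A₁ ∪ A₂) (B₁ ∪ B₂) := by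
  refine ⟨2, ![g₁, g₂], ![A₁, A₂], ![B₁, B₂], ?_, ?_, ?_, ?_, ?_⟩
  · ext; simp [Fin.exists_fin_two]
  · ext; simp [Fin.exists_fin_two]
  · simp [Pairwise, Fin.forall_fin_two, hA, hA.symm]
  · simp [Pairwise, Fin.forall_fin_two, hB, hB.symm]
  · simp [Fin.forall_fin_two, h₁, h₂]

end Equidecomposable

namespace Paradoxical

theorem image {H G Y X : Type*} [Group H] [Group G] [MulAction H Y] [MulAction G X]
    {φ : H → G} (f : Y →ₑ[φ] X) (hf : Injective f) {E : Set Y} (h : Paradoxical H E) :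
    Paradoxical G (f '' E) := by
  obtain ⟨A, B, hA, hB, hAB, hAE, hBE⟩ := h
  exact ⟨f '' A, f '' B, image_mono hA, image_mono hB, (disjoint_image_iff hf).mpr hAB,
    hAE.image f hf, hBE.image f hf⟩

theorem preimage {G Y Z : Type*} [Group G] [MulAction G Y] [MulAction G Z]
    (f : Y →[G] Z) {E : Set Z} (h : Paradoxical G E) : Paradoxical G (f ⁻¹' E) := by
  obtain ⟨A, B, hA, hB, hAB, hAE, hBE⟩ := h
  exact ⟨f ⁻¹' A, f ⁻¹' B, preimage_mono hA, preimage_mono hB, hAB.preimage f,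
    hAE.preimage f, hBE.preimage f⟩

theorem univ_of_mulEquiv {H G : Type*} [Group H] [Group G] (e : H ≃* G)
    (h : Paradoxical H (univ : Set H)) : Paradoxical G (univ : Set G) := by
  let f : H →ₑ[e] G := ⟨e, map_mul e⟩
  simpa only [image_univ_of_surjective (show Surjective f from e.surjective)] using
    h.image f e.injective

end Paradoxical

/-- Send `y` to the element carrying a chosen representative of its orbit to `y`. -/
theorem MulAction.nonempty_mulActionHom_self {G Y : Type*} [Group G] [MulAction G Y]
    [IsCancelSMul G Y] : Nonempty (Y →[G] G) := by
  have hrep (y : Y) : ∃ g : G, g • (Quotient.mk (orbitRel G Y) y).out = y := by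
    obtain ⟨g, hg⟩ := Quotient.mk_out (s := orbitRel G Y) y
    exact ⟨g⁻¹, inv_smul_eq_iff.mpr hg.symm⟩
  choose c hc using hrep
  refine ⟨⟨c, fun g y => IsCancelSMul.right_cancel _ _ (Quotient.mk (orbitRel G Y) y).out ?_⟩⟩
  have horbit : Quotient.mk (orbitRel G Y) (g • y) = Quotient.mk (orbitRel G Y) y :=
    Quotient.sound (mem_orbit y g)
  simp only [id, smul_eq_mul, mul_smul, hc]
  rw [← horbit, hc]

theorem Paradoxical.univ_of_isCancelSMul {G Y : Type*} [Group G] [MulAction G Y]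
    [IsCancelSMul G Y] (h : Paradoxical G (univ : Set G)) : Paradoxical G (univ : Set Y) :=
  let ⟨f⟩ := MulAction.nonempty_mulActionHom_self (G := G) (Y := Y)
  h.preimage f

namespace FreeGroup

variable {α : Type*} [DecidableEq α]

theorem mk_singleton_smul_startsWith_s15 (w : α × Bool) :
    mk [w] • startsWith (w.1, !w.2) = (startsWith w)ᶜ := by
  have hinv : (mk [w])⁻¹ = mk [(w.1, !w.2)] := by simp [inv_mk, invRev]
  ext g
  rw [mem_smul_set_iff_inv_smul_mem, smul_eq_mul, mem_compl_iff]
  constructor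
  · intro hstart hg
    obtain ⟨t, ht⟩ : ∃ t, g.toWord = w :: t := by
      rcases h : g.toWord with _ | ⟨v, t⟩ <;> simp_all [startsWith]
    have hred : IsReduced (w :: t) := ht ▸ isReduced_toWord
    have hg : g = mk [w] * mk t := by rw [← mk_toWord (x := g), ht, mul_mk, List.singleton_append]
    rw [hg, inv_mul_cancel_left] at hstart
    obtain ⟨s, rfl⟩ : ∃ s, t = (w.1, !w.2) :: s := by
      rcases t with _ | ⟨v, s⟩ <;>
        simp_all [startsWith, (hred.infix (List.infix_cons List.infix_rfl)).reduce_eq]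
    simp [isReduced_cons_cons] at hred
  · intro hg
    rw [hinv]
    exact startsWith_mk_mul g (by simpa using hg)

theorem paradoxical_univ_s15 {a b : α} (hab : a ≠ b) :
    Paradoxical (FreeGroup α) (univ : Set (FreeGroup α)) := by
  have hequi (c : α) :
      Equidecomposable (FreeGroup α) (startsWith (c, true) ∪ startsWith (c, false)) univ := by
    have hcompl := mk_singleton_smul_startsWith_s15 (c, true)
    rw [← union_compl_self (startsWith (c, true)), ← hcompl]
    exact .union_of_eq_smul (by simp) (hcompl ▸ disjoint_compl_right)
      (one_smul _ _).symm (inv_smul_smul _ _).symm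
  exact ⟨_, _, subset_univ _, subset_univ _, by simp [hab], hequi a, hequi b⟩

end FreeGroup

theorem Matrix.list_prod_map_vecMulVec_ne_zero {K ι n : Type*} [Ring K] [NoZeroDivisors K]
    [Fintype n] [DecidableEq n] {u v : ι → n → K} (hu : ∀ i, u i ≠ 0) (hv : ∀ i, v i ≠ 0)
    {L : List ι} (hL : L ≠ []) (hchain : L.IsChain fun i j => v i ⬝ᵥ u j ≠ 0) :
    (L.map fun i => vecMulVec (u i) (v i)).prod ≠ 0 := by
  suffices key : ∀ (i : ι) (L : List ι), (i :: L).IsChain (fun i j => v i ⬝ᵥ u j ≠ 0) →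
      ∃ w ≠ 0, ((i :: L).map fun i => vecMulVec (u i) (v i)).prod = vecMulVec (u i) w by
    obtain ⟨i, L, rfl⟩ := List.exists_cons_of_ne_nil hL
    obtain ⟨w, hw, hprod⟩ := key i L hchain
    exact hprod ▸ vecMulVec_ne_zero (hu i) hw
  intro i L
  induction L generalizing i with
  | nil => exact fun _ => ⟨v i, hv i, by simp⟩
  | cons j L ih =>
    intro h
    rw [List.isChain_cons_cons] at h
    obtain ⟨w, hw, hprod⟩ := ih j h.2
    refine ⟨(v i ⬝ᵥ u j) • w, smul_ne_zero h.1 hw, ?_⟩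
    rw [List.map_cons, List.prod_cons, hprod, vecMulVec_mul_vecMulVec]

theorem dotProduct_mulVec_self_of_mem_orthogonalGroup {n : Type*} [Fintype n] [DecidableEq n]
    {M : Matrix n n ℝ} (hM : M ∈ orthogonalGroup n ℝ) (x : n → ℝ) :
    M *ᵥ x ⬝ᵥ M *ᵥ x = x ⬝ᵥ x := by
  rw [mem_orthogonalGroup_iff'] at hM
  rw [dotProduct_mulVec, vecMul_mulVec, hM, vecMul_one]

theorem smul_mem_sphereSet {n : ℕ} (g : orthogonalGroup (Fin (n + 1)) ℝ) {x : Fin (n + 1) → ℝ}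
    (hx : x ∈ SphereSet n) : g • x ∈ SphereSet n := by
  have hsq (y : Fin (n + 1) → ℝ) : ∑ i, y i ^ 2 = y ⬝ᵥ y := by simp [dotProduct, sq]
  simp only [SphereSet, mem_ofPred_eq, hsq] at hx ⊢
  exact (dotProduct_mulVec_self_of_mem_orthogonalGroup g.2 x).trans hx

noncomputable def rotationHom : FreeGroup Bool →* SO 3 := FreeGroup.lift fun b => cond b soA soB

theorem range_rotationHom : rotationHom.range = Hsub := by
  rw [rotationHom, FreeGroup.range_lift_eq_closure, Hsub]
  congr
  ext g
  simp [or_comm]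

def SO.toMatrix (n : ℕ) : SO n →* Matrix (Fin n) (Fin n) ℝ :=
  (orthogonalGroup (Fin n) ℝ).subtype.comp (SO n).subtype

/-- Three times the matrix of the letter `x`, where `(true, ·)` stands for `A^{±1}` and
`(false, ·)` for `B^{±1}`, written in the basis `(e₁, √2 e₂, e₃)`. -/
def letterIntMatrix : Bool × Bool → Matrix (Fin 3) (Fin 3) ℤ
  | (true, true) => !![1, -4, 0; 2, 1, 0; 0, 0, 3]
  | (true, false) => !![1, 4, 0; -2, 1, 0; 0, 0, 3]
  | (false, true) => !![3, 0, 0; 0, 1, -2; 0, 4, 1]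
  | (false, false) => !![3, 0, 0; 0, 1, 2; 0, -4, 1]

def letterAxisModThree : Bool × Bool → Fin 3 → ZMod 3
  | (true, true) => ![1, 2, 0]
  | (true, false) => ![1, 1, 0]
  | (false, true) => ![0, 1, 1]
  | (false, false) => ![0, 1, 2]

theorem letterIntMatrix_map_modThree (x : Bool × Bool) :
    (letterIntMatrix x).map (Int.castRingHom (ZMod 3)) =
      vecMulVec (letterAxisModThree x) (letterAxisModThree x) := by
  rcases x with ⟨_ | _, _ | _⟩ <;> decide

theorem letterAxisModThree_ne_zero (x : Bool × Bool) : letterAxisModThree x ≠ 0 := by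
  revert x; decide

theorem dotProduct_letterAxisModThree_ne_zero {x y : Bool × Bool} (h : x.1 = y.1 → x.2 = y.2) :
    letterAxisModThree x ⬝ᵥ letterAxisModThree y ≠ 0 := by
  revert x y; decide

theorem list_prod_letterIntMatrix_map_modThree (L : List (Bool × Bool)) :
    (L.map letterIntMatrix).prod.map (Int.castRingHom (ZMod 3)) =
      (L.map fun x => vecMulVec (letterAxisModThree x) (letterAxisModThree x)).prod := by
  induction L with
  | nil => simp
  | cons x L ih => rw [List.map_cons, List.prod_cons, Matrix.map_mul, ih,
      letterIntMatrix_map_modThree, List.map_cons, List.prod_cons]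

theorem three_smul_letter_mul_diagonal (x : Bool × Bool) :
    (3 : ℝ) • SO.toMatrix 3 (rotationHom (FreeGroup.mk [x])) * diagonal ![1, √2, 1] =
      diagonal ![1, √2, 1] * (letterIntMatrix x).map (Int.castRingHom ℝ) := by
  rcases x with ⟨_ | _, _ | _⟩ <;> ext i j <;> fin_cases i <;> fin_cases j <;>
    simp [rotationHom, SO.toMatrix, soA, soB, matA, matB, letterIntMatrix, Matrix.diagonal,
      Matrix.mul_apply] <;>
    nlinarith [sqrt_two_mul_self]

theorem three_pow_smul_word_mul_diagonal (L : List (Bool × Bool)) :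
    (3 : ℝ) ^ L.length • SO.toMatrix 3 (rotationHom (FreeGroup.mk L)) * diagonal ![1, √2, 1] =
      diagonal ![1, √2, 1] * (L.map letterIntMatrix).prod.map (Int.castRingHom ℝ) := by
  induction L with
  | nil => simp [← FreeGroup.one_eq_mk]
  | cons x L ih =>
    rw [← List.singleton_append, ← FreeGroup.mul_mk, map_mul, map_mul]
    calc (3 : ℝ) ^ ([x] ++ L).length • (SO.toMatrix 3 (rotationHom (FreeGroup.mk [x])) *
          SO.toMatrix 3 (rotationHom (FreeGroup.mk L))) * diagonal ![1, √2, 1]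
        = (3 : ℝ) • SO.toMatrix 3 (rotationHom (FreeGroup.mk [x])) *
          ((3 : ℝ) ^ L.length • SO.toMatrix 3 (rotationHom (FreeGroup.mk L)) *
            diagonal ![1, √2, 1]) := by
          simp only [List.length_append, List.length_singleton, Matrix.smul_mul, Matrix.mul_smul,
            smul_smul, Matrix.mul_assoc]
          ring_nf
      _ = diagonal ![1, √2, 1] * ((letterIntMatrix x).map (Int.castRingHom ℝ) *
          (L.map letterIntMatrix).prod.map (Int.castRingHom ℝ)) := by
          rw [ih, ← Matrix.mul_assoc, three_smul_letter_mul_diagonal, Matrix.mul_assoc]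
      _ = _ := by rw [← Matrix.map_mul, List.singleton_append, List.map_cons, List.prod_cons]

theorem rotationHom_injective : Injective rotationHom := by
  rw [injective_iff_map_eq_one]
  intro w hw
  by_contra hne
  have hD : IsUnit (diagonal ![1, √2, 1]) :=
    isUnit_diagonal.mpr (Pi.isUnit_iff.mpr fun i => by fin_cases i <;> simp)
  have hint :
      (w.toWord.map letterIntMatrix).prod = Matrix.diagonal fun _ => 3 ^ w.toWord.length := by
    have h := three_pow_smul_word_mul_diagonal w.toWord
    rw [FreeGroup.mk_toWord, hw, map_one] at h
    refine Matrix.map_injective (Int.castRingHom ℝ).injective_int (hD.mul_left_cancel ?_)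
    beta_reduce
    rw [← h, Matrix.diagonal_map (map_zero _)]
    simp [Matrix.smul_eq_diagonal_mul, mul_comm]
  have hmod : (w.toWord.map letterIntMatrix).prod.map (Int.castRingHom (ZMod 3)) = 0 := by
    have hn : w.toWord.length ≠ 0 := by simpa [FreeGroup.toWord_eq_nil_iff] using hne
    rw [hint, Matrix.diagonal_map (map_zero _)]
    simp [(by decide : (3 : ZMod 3) = 0), zero_pow hn]
  refine list_prod_map_vecMulVec_ne_zero letterAxisModThree_ne_zero letterAxisModThree_ne_zero
    (mt FreeGroup.toWord_eq_nil_iff.mp hne)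
    (FreeGroup.isReduced_toWord.imp fun _ _ => dotProduct_letterAxisModThree_ne_zero) ?_
  rw [← list_prod_letterIntMatrix_map_modThree, hmod]

theorem smul_mem_sphere_diff_fixedPointSet {h : SO 3} (hh : h ∈ Hsub) {x : Fin 3 → ℝ}
    (hx : x ∈ SphereSet 2 \ fixedPointSet) : h • x ∈ SphereSet 2 \ fixedPointSet := by
  refine ⟨smul_mem_sphereSet h.1 hx.1, ?_⟩
  rintro ⟨-, g, hg, hg1, hfix⟩
  refine hx.2 ⟨hx.1, h⁻¹ * g * h, Hsub.mul_mem (Hsub.mul_mem (Hsub.inv_mem hh) hg) hh, ?_, ?_⟩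
  · rwa [Ne, mul_assoc, inv_mul_eq_one, eq_comm, mul_eq_right]
  · rw [mul_smul, mul_smul, hfix, inv_smul_smul]

def sphereDiffFixed : SubMulAction Hsub (Fin 3 → ℝ) where
  carrier := SphereSet 2 \ fixedPointSet
  smul_mem' h _ hx := smul_mem_sphere_diff_fixedPointSet h.2 hx

instance : IsCancelSMul Hsub sphereDiffFixed :=
  isCancelSMul_iff_eq_one_of_smul_eq.mpr fun h x hfix => by
    by_contra hne
    exact x.2.2 ⟨x.2.1, h, h.2, fun h1 => hne (Subtype.ext h1), congrArg Subtype.val hfix⟩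

/-- `S² \ D` is `SO(3)`-paradoxical, where `D` is the set of points of `S²` fixed by a
non-identity element of the free subgroup `H = ⟨A, B⟩`. -/
theorem sphere_minus_fixed_points_paradoxical :
    Paradoxical (SO 3) (SphereSet 2 \ fixedPointSet) := by
  have hH : Paradoxical Hsub (univ : Set Hsub) :=
    (FreeGroup.paradoxical_univ_s15 Bool.false_ne_true).univ_of_mulEquiv
      ((MonoidHom.ofInjective rotationHom_injective).trans
        (MulEquiv.subgroupCongr range_rotationHom))
  let ι : MulActionHom (Subtype.val : Hsub → SO 3) sphereDiffFixed (Fin 3 → ℝ) :=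
    ⟨Subtype.val, fun _ _ => rfl⟩
  have h := (hH.univ_of_isCancelSMul (Y := sphereDiffFixed)).image ι Subtype.val_injective
  rwa [image_univ, show range ι = SphereSet 2 \ fixedPointSet from Subtype.range_coe] at h
end

section
/- For every countable subset D of the unit sphere S² ⊂ ℝ³, the sets S² and S² \ D are SO(3)-equidecomposable. -/
open Pointwise Matrix

set_option synthInstance.maxHeartbeats 1000000
set_option maxHeartbeats 1000000

open Real

noncomputable def RzM (θ : ℝ) : Matrix (Fin 3) (Fin 3) ℝ :=
  !![Real.cos θ, -Real.sin θ, 0; Real.sin θ, Real.cos θ, 0; 0, 0, 1]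

noncomputable def RxM (φ : ℝ) : Matrix (Fin 3) (Fin 3) ℝ :=
  !![1, 0, 0; 0, Real.cos φ, -Real.sin φ; 0, Real.sin φ, Real.cos φ]

theorem RzM_mem (θ : ℝ) : RzM θ ∈ Matrix.orthogonalGroup (Fin 3) ℝ := by
  rw [Matrix.mem_orthogonalGroup_iff]
  ext i j
  fin_cases i <;> fin_cases j <;>
    simp [RzM, Matrix.mul_apply, Fin.sum_univ_three, Matrix.one_apply] <;>
    nlinarith [Real.sin_sq_add_cos_sq θ]

theorem RxM_mem (φ : ℝ) : RxM φ ∈ Matrix.orthogonalGroup (Fin 3) ℝ := by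
  rw [Matrix.mem_orthogonalGroup_iff]
  ext i j
  fin_cases i <;> fin_cases j <;>
    simp [RxM, Matrix.mul_apply, Fin.sum_univ_three, Matrix.one_apply] <;>
    nlinarith [Real.sin_sq_add_cos_sq φ]

theorem RzM_det (θ : ℝ) : (RzM θ).det = 1 := by
  simp [RzM, Matrix.det_fin_three]; nlinarith [Real.sin_sq_add_cos_sq θ]

theorem RxM_det (φ : ℝ) : (RxM φ).det = 1 := by
  simp [RxM, Matrix.det_fin_three]; nlinarith [Real.sin_sq_add_cos_sq φ]

theorem RzM_mul (a b : ℝ) : RzM a * RzM b = RzM (a + b) := by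
  ext i j
  fin_cases i <;> fin_cases j <;>
    simp [RzM, Matrix.mul_apply, Fin.sum_univ_three, Real.cos_add, Real.sin_add, Matrix.vecHead, Matrix.vecTail] <;> ring

theorem RxM_mul (a b : ℝ) : RxM a * RxM b = RxM (a + b) := by
  ext i j
  fin_cases i <;> fin_cases j <;>
    simp [RxM, Matrix.mul_apply, Fin.sum_univ_three, Real.cos_add, Real.sin_add, Matrix.vecHead, Matrix.vecTail] <;> ring

theorem RzM_zero : RzM 0 = 1 := by
  ext i j; fin_cases i <;> fin_cases j <;> simp [RzM, Matrix.one_apply, Matrix.vecHead, Matrix.vecTail]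

theorem RxM_zero : RxM 0 = 1 := by
  ext i j; fin_cases i <;> fin_cases j <;> simp [RxM, Matrix.one_apply, Matrix.vecHead, Matrix.vecTail]

noncomputable def rz (θ : ℝ) : SO 3 := ⟨⟨RzM θ, RzM_mem θ⟩, RzM_det θ⟩
noncomputable def rx (φ : ℝ) : SO 3 := ⟨⟨RxM φ, RxM_mem φ⟩, RxM_det φ⟩

theorem rz_mul (a b : ℝ) : rz a * rz b = rz (a + b) := by
  apply Subtype.ext; apply Subtype.ext
  show RzM a * RzM b = RzM (a + b)
  exact RzM_mul a b

theorem rx_mul (a b : ℝ) : rx a * rx b = rx (a + b) := by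
  apply Subtype.ext; apply Subtype.ext
  show RxM a * RxM b = RxM (a + b)
  exact RxM_mul a b

theorem rz_zero : rz 0 = 1 := by
  apply Subtype.ext; apply Subtype.ext; exact RzM_zero

theorem rx_zero : rx 0 = 1 := by
  apply Subtype.ext; apply Subtype.ext; exact RxM_zero

theorem so_smul_def (g : SO 3) (v : Fin 3 → ℝ) : g • v = (g.1.1).mulVec v := rfl

theorem rz_pow (θ : ℝ) (n : ℕ) : rz θ ^ n = rz (n * θ) := by
  induction n with
  | zero => simp [rz_zero]
  | succ n ih =>
    rw [pow_succ, ih, rz_mul]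
    congr 1
    push_cast
    ring

theorem countable_cos_sin (c s : ℝ) :
    {ψ : ℝ | Real.cos ψ = c ∧ Real.sin ψ = s}.Countable := by
  rcases Set.eq_empty_or_nonempty {ψ : ℝ | Real.cos ψ = c ∧ Real.sin ψ = s} with h | ⟨ψ₀, hψ₀⟩
  · simp [h]
  refine Set.Countable.mono ?_ (Set.countable_range fun k : ℤ => ψ₀ + 2 * π * k)
  rintro ψ ⟨hc, hs⟩
  obtain ⟨hc0, hs0⟩ := hψ₀
  have h1 : (ψ : Real.Angle) = (ψ₀ : Real.Angle) :=
    Real.Angle.cos_sin_inj (by rw [hc, hc0]) (by rw [hs, hs0])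
  obtain ⟨k, hk⟩ := Real.Angle.angle_eq_iff_two_pi_dvd_sub.mp h1
  refine ⟨k, ?_⟩
  show ψ₀ + 2 * π * (k : ℝ) = ψ
  linarith

theorem countable_circle (a b : ℝ) (hab : a ^ 2 + b ^ 2 = 1) :
    {φ : ℝ | Real.cos φ * a + Real.sin φ * b = 0}.Countable := by
  have hsub : {φ : ℝ | Real.cos φ * a + Real.sin φ * b = 0} ⊆
      {φ : ℝ | Real.cos φ = -b ∧ Real.sin φ = a} ∪ {φ : ℝ | Real.cos φ = b ∧ Real.sin φ = -a} := by
    intro φ hφ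
    simp only [Set.mem_setOf_eq] at hφ
    simp only [Set.mem_union, Set.mem_setOf_eq]
    set c := Real.cos φ with hc
    set s := Real.sin φ with hs
    have hcs : c ^ 2 + s ^ 2 = 1 := by
      simp [hc, hs, Real.cos_sq_add_sin_sq φ]
    set t := s * a - c * b with ht
    have h1 : c = -t * b := by linear_combination a * hφ - c * hab
    have h2 : s = t * a := by linear_combination b * hφ - s * hab
    have e1 : c ^ 2 = t ^ 2 * b ^ 2 := by rw [h1]; ring
    have e2 : s ^ 2 = t ^ 2 * a ^ 2 := by rw [h2]; ring
    have h3 : (t - 1) * (t + 1) = 0 := by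
      linear_combination (-(t ^ 2)) * hab - e1 - e2 + hcs
    rcases mul_eq_zero.mp h3 with h | h
    · left
      have ht1 : t = 1 := by linarith
      exact ⟨by rw [h1, ht1]; ring, by rw [h2, ht1]; ring⟩
    · right
      have ht1 : t = -1 := by linarith
      exact ⟨by rw [h1, ht1]; ring, by rw [h2, ht1]; ring⟩
  exact Set.Countable.mono hsub ((countable_cos_sin _ _).union (countable_cos_sin _ _))

theorem countable_rot (x y : Fin 3 → ℝ) (hx : x 0 ≠ 0 ∨ x 1 ≠ 0) :
    {ψ : ℝ | (RzM ψ).mulVec x = y}.Countable := by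
  rcases Set.eq_empty_or_nonempty {ψ : ℝ | (RzM ψ).mulVec x = y} with h | ⟨ψ₀, hψ₀⟩
  · simp [h]
  refine Set.Countable.mono ?_ (countable_cos_sin (Real.cos ψ₀) (Real.sin ψ₀))
  intro ψ hψ
  simp only [Set.mem_setOf_eq] at hψ hψ₀ ⊢
  have e0 := congr_fun hψ 0
  have e1 := congr_fun hψ 1
  have f0 := congr_fun hψ₀ 0
  have f1 := congr_fun hψ₀ 1
  simp [RzM, Matrix.mulVec, dotProduct, Fin.sum_univ_three,
    Matrix.vecHead, Matrix.vecTail] at e0 e1 f0 f1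
  set a := Real.cos ψ - Real.cos ψ₀ with ha
  set b := Real.sin ψ - Real.sin ψ₀ with hb
  have g0 : a * x 0 - b * x 1 = 0 := by rw [ha, hb]; linear_combination e0 - f0
  have g1 : b * x 0 + a * x 1 = 0 := by rw [ha, hb]; linear_combination e1 - f1
  have k0 : (a ^ 2 + b ^ 2) * x 0 = 0 := by linear_combination a * g0 + b * g1
  have k1 : (a ^ 2 + b ^ 2) * x 1 = 0 := by linear_combination a * g1 - b * g0
  have hab : a ^ 2 + b ^ 2 = 0 := by
    rcases hx with h | h
    · exact (mul_eq_zero.mp k0).resolve_right h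
    · exact (mul_eq_zero.mp k1).resolve_right h
  have haz : a = 0 := by nlinarith [sq_nonneg a, sq_nonneg b]
  have hbz : b = 0 := by nlinarith [sq_nonneg a, sq_nonneg b]
  rw [ha] at haz
  rw [hb] at hbz
  exact ⟨by linarith, by linarith⟩

theorem so_smul_sphere (g : SO 3) (v : Fin 3 → ℝ) (hv : v ∈ SphereSet 2) :
    g • v ∈ SphereSet 2 := by
  have hg : star g.1.1 * g.1.1 = 1 := g.1.2.1
  have hstar : star g.1.1 = (g.1.1)ᵀ := by
    ext i j
    simp [Matrix.star_apply]
  rw [hstar] at hg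
  have key : ∀ w : Fin 3 → ℝ, (∑ i, w i ^ 2) = w ⬝ᵥ w := by
    intro w
    simp [dotProduct, sq]
  show (∑ i, (g • v) i ^ 2) = 1
  rw [so_smul_def, key]
  have h2 : (g.1.1.mulVec v) ⬝ᵥ (g.1.1.mulVec v) = v ⬝ᵥ v := by
    rw [Matrix.dotProduct_mulVec, ← Matrix.mulVec_transpose, Matrix.mulVec_mulVec, hg,
      Matrix.one_mulVec]
  rw [h2, ← key]
  exact hv

theorem conj_pow_grp {G : Type*} [Group G] (a b : G) (n : ℕ) :
    (a * b * a⁻¹) ^ n = a * b ^ n * a⁻¹ := by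
  induction n with
  | zero => simp
  | succ n ih => rw [pow_succ, ih, pow_succ]; group

theorem exists_real_notMem {s : Set ℝ} (hs : s.Countable) : ∃ x : ℝ, x ∉ s := by
  by_contra h
  push_neg at h
  exact Cardinal.not_countable_real (hs.mono fun x _ => h x)

/-- For every countable subset `D` of the unit sphere `S² ⊆ ℝ³`, the sets `S²` and
`S² \ D` are `SO(3)`-equidecomposable. -/
theorem sphere_equidecomposable_compl_countable (D : Set (Fin 3 → ℝ))
    (hD : D ⊆ SphereSet 2) (hDc : D.Countable) :
    Equidecomposable (SO 3) (SphereSet 2) (SphereSet 2 \ D) := by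
  -- Choose an angle φ so that the conjugated axis misses D
  obtain ⟨φ, hφ⟩ : ∃ φ : ℝ, φ ∉ ⋃ d ∈ D,
      {ψ : ℝ | d 0 = 0 ∧ Real.cos ψ * d 1 + Real.sin ψ * d 2 = 0} := by
    apply exists_real_notMem
    refine Set.Countable.biUnion hDc fun d hd => ?_
    by_cases h0 : d 0 = 0
    · have hd12 : d 1 ^ 2 + d 2 ^ 2 = 1 := by
        have hs : ∑ i : Fin 3, d i ^ 2 = 1 := hD hd
        rw [Fin.sum_univ_three, h0] at hs
        nlinarith [hs]
      refine Set.Countable.mono ?_ (countable_circle (d 1) (d 2) hd12)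
      intro ψ hψ
      exact hψ.2
    · refine Set.Countable.mono ?_ Set.countable_empty
      intro ψ hψ
      exact absurd hψ.1 h0
  -- all conjugated points of D avoid the poles
  have hgood : ∀ d ∈ D, ((RxM (-φ)).mulVec d) 0 ≠ 0 ∨ ((RxM (-φ)).mulVec d) 1 ≠ 0 := by
    intro d hd
    have h1 : ¬(d 0 = 0 ∧ Real.cos φ * d 1 + Real.sin φ * d 2 = 0) := by
      intro hc
      exact hφ (Set.mem_biUnion hd hc)
    have c0 : ((RxM (-φ)).mulVec d) 0 = d 0 := by
      simp [RxM, Matrix.mulVec, dotProduct, Fin.sum_univ_three,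
        Matrix.vecHead, Matrix.vecTail]
    have c1 : ((RxM (-φ)).mulVec d) 1 = Real.cos φ * d 1 + Real.sin φ * d 2 := by
      simp [RxM, Matrix.mulVec, dotProduct, Fin.sum_univ_three,
        Matrix.vecHead, Matrix.vecTail, Real.cos_neg, Real.sin_neg]
      try ring
    rw [c0, c1]
    tauto
  -- choose a good rotation angle θ
  obtain ⟨θ, hθ⟩ : ∃ θ : ℝ, θ ∉ ⋃ x ∈ D, ⋃ y ∈ D, ⋃ n : ℕ,
      {θ : ℝ | (RzM (((n : ℝ) + 1) * θ)).mulVec ((RxM (-φ)).mulVec x)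
        = (RxM (-φ)).mulVec y} := by
    apply exists_real_notMem
    refine Set.Countable.biUnion hDc fun x hx => Set.Countable.biUnion hDc fun y hy =>
      Set.countable_iUnion fun n => ?_
    have hinj : Function.Injective fun t : ℝ => ((n : ℝ) + 1) * t :=
      mul_right_injective₀ (by positivity)
    exact Set.Countable.preimage (countable_rot _ _ (hgood x hx)) hinj
  set ρ : SO 3 := rx φ * rz θ * (rx φ)⁻¹ with hρdef
  have hrxinv : (rx φ)⁻¹ = rx (-φ) :=
    inv_eq_of_mul_eq_one_right (by rw [rx_mul]; simp [rx_zero])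
  have hinv2 : rx (-φ) * rx φ = 1 := by rw [rx_mul]; simp [rx_zero]
  have hpow : ∀ n : ℕ, ρ ^ n = rx φ * rz ((n : ℝ) * θ) * rx (-φ) := by
    intro n
    rw [hρdef, conj_pow_grp, rz_pow, hrxinv]
  -- ρ^(n+1) never maps a point of D into D
  have hkeyP : ∀ (n : ℕ), ∀ x ∈ D, (ρ ^ (n + 1)) • x ∉ D := by
    intro n x hx hmem
    apply hθ
    refine Set.mem_biUnion hx (Set.mem_biUnion hmem (Set.mem_iUnion.mpr ⟨n, ?_⟩))
    show (RzM (((n : ℝ) + 1) * θ)).mulVec ((RxM (-φ)).mulVec x)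
      = (RxM (-φ)).mulVec ((ρ ^ (n + 1)) • x)
    have h2 : rx (-φ) * ρ ^ (n + 1) = rz (((n : ℝ) + 1) * θ) * rx (-φ) := by
      rw [hpow (n + 1)]
      push_cast
      rw [← mul_assoc, ← mul_assoc, hinv2, one_mul]
    calc (RzM (((n : ℝ) + 1) * θ)).mulVec ((RxM (-φ)).mulVec x)
        = (rz (((n : ℝ) + 1) * θ)) • ((rx (-φ)) • x) := rfl
      _ = (rz (((n : ℝ) + 1) * θ) * rx (-φ)) • x := (mul_smul _ _ _).symm
      _ = (rx (-φ) * ρ ^ (n + 1)) • x := by rw [h2]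
      _ = (rx (-φ)) • ((ρ ^ (n + 1)) • x) := mul_smul _ _ _
      _ = (RxM (-φ)).mulVec ((ρ ^ (n + 1)) • x) := rfl
  set Dbar : Set (Fin 3 → ℝ) := ⋃ n : ℕ, (ρ ^ n) • D with hDbar
  have hDsub : D ⊆ Dbar := by
    intro x hx
    refine Set.mem_iUnion.mpr ⟨0, ?_⟩
    simpa [pow_zero, one_smul] using hx
  have hDbarS : Dbar ⊆ SphereSet 2 := by
    intro z hz
    obtain ⟨n, hn⟩ := Set.mem_iUnion.mp hz
    obtain ⟨u, hu, rfl⟩ := hn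
    exact so_smul_sphere _ _ (hD hu)
  have hkey : ρ • Dbar = Dbar \ D := by
    ext z
    constructor
    · intro hz
      obtain ⟨w, hw, rfl⟩ := hz
      obtain ⟨n, hn⟩ := Set.mem_iUnion.mp hw
      obtain ⟨u, hu, rfl⟩ := hn
      show ρ • (ρ ^ n) • u ∈ Dbar \ D
      have hz1 : ρ • (ρ ^ n) • u = (ρ ^ (n + 1)) • u := by
        rw [← mul_smul, ← pow_succ']
      rw [hz1]
      exact ⟨Set.mem_iUnion.mpr ⟨n + 1, Set.smul_mem_smul_set hu⟩, hkeyP n u hu⟩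
    · rintro ⟨hz1, hz2⟩
      obtain ⟨n, hn⟩ := Set.mem_iUnion.mp hz1
      obtain ⟨u, hu, rfl⟩ := hn
      cases n with
      | zero =>
        simp only [pow_zero, one_smul] at hz2
        exact absurd hu hz2
      | succ m =>
        show (ρ ^ (m + 1)) • u ∈ ρ • Dbar
        refine ⟨(ρ ^ m) • u, Set.mem_iUnion.mpr ⟨m, Set.smul_mem_smul_set hu⟩, ?_⟩
        show ρ • (ρ ^ m) • u = (ρ ^ (m + 1)) • u
        rw [← mul_smul, ← pow_succ']
  -- assemble the equidecomposition
  refine ⟨2, ![ρ⁻¹, 1], ![Dbar, SphereSet 2 \ Dbar], ![ρ • Dbar, SphereSet 2 \ Dbar],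
    ?_, ?_, ?_, ?_, ?_⟩
  · ext z
    simp only [Set.mem_iUnion, Fin.exists_fin_two, Matrix.cons_val_zero, Matrix.cons_val_one,
      Matrix.head_cons]
    constructor
    · intro hz
      by_cases h : z ∈ Dbar
      · exact Or.inl h
      · exact Or.inr ⟨hz, h⟩
    · rintro (h | h)
      · exact hDbarS h
      · exact h.1
  · ext z
    simp only [Set.mem_iUnion, Fin.exists_fin_two, Matrix.cons_val_zero, Matrix.cons_val_one,
      Matrix.head_cons, hkey]
    constructor
    · rintro ⟨hz1, hz2⟩
      by_cases h : z ∈ Dbar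
      · exact Or.inl ⟨h, hz2⟩
      · exact Or.inr ⟨hz1, h⟩
    · rintro (⟨h1, h2⟩ | ⟨h1, h2⟩)
      · exact ⟨hDbarS h1, h2⟩
      · exact ⟨h1, fun hc => h2 (hDsub hc)⟩
  · have hd : Disjoint Dbar (SphereSet 2 \ Dbar) := disjoint_sdiff_self_right
    intro i j hij
    fin_cases i <;> fin_cases j <;>
      simp only [Matrix.cons_val_zero, Matrix.cons_val_one, Matrix.head_cons] <;>
      first
        | exact absurd rfl hij
        | exact hd
        | exact hd.symm
  · have hsub2 : ρ • Dbar ⊆ Dbar := by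
      rw [hkey]; exact Set.diff_subset
    have hd : Disjoint (ρ • Dbar) (SphereSet 2 \ Dbar) :=
      disjoint_sdiff_self_right.mono_left hsub2
    intro i j hij
    fin_cases i <;> fin_cases j <;>
      simp only [Matrix.cons_val_zero, Matrix.cons_val_one, Matrix.head_cons] <;>
      first
        | exact absurd rfl hij
        | exact hd
        | exact hd.symm
  · intro i
    fin_cases i
    · show Dbar = ρ⁻¹ • (ρ • Dbar)
      rw [inv_smul_smul]
    · show SphereSet 2 \ Dbar = (1 : SO 3) • (SphereSet 2 \ Dbar)
      rw [one_smul]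
end

section
/- For every countable subset D of the unit sphere S² ⊂ ℝ³, there exists a rotation g ∈ SO(3) such that the iterated images of D under g are pairwise disjoint: for all natural numbers m ≠ n, g^m(D) ∩ g^n(D) = ∅. -/
open Pointwise Matrix

set_option synthInstance.maxHeartbeats 1000000
set_option maxHeartbeats 1000000

/-! A rotation `g` about an axis `p` with `±p ∉ D` works as soon as its angle avoids countably
many values: for `x, y ∈ D` (not on the axis) and `k ≥ 1`, the angles `θ` with `g_θ^k x = y`
lie in one coset of `(2π / k) ℤ`. Such axes exist because only countably many are excluded. -/

open Real

theorem Set.Countable.exists_notMem {α : Type*} [Uncountable α] {s : Set α} (hs : s.Countable) :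
    ∃ a, a ∉ s :=
  (Set.ne_univ_iff_exists_notMem s).1 fun h => Set.not_countable_univ (h ▸ hs)

section Wandering

variable {G α : Type*} [Group G] [MulAction G α]

def IsWandering (g : G) (D : Set α) : Prop :=
  ∀ k : ℕ, 0 < k → ∀ x ∈ D, g ^ k • x ∉ D

theorem IsWandering.disjoint_pow_smul {g : G} {D : Set α} (hg : IsWandering g D) {m n : ℕ}
    (hmn : m ≠ n) : Disjoint (g ^ m • D) (g ^ n • D) := by
  wlog hlt : m < n generalizing m n
  · exact (this hmn.symm (by omega)).symm
  obtain ⟨k, rfl⟩ := Nat.exists_eq_add_of_lt hlt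
  rw [Set.disjoint_left]
  rintro _ ⟨x, hx, rfl⟩ ⟨y, hy, hyx⟩
  dsimp only at hyx
  rw [add_assoc, pow_add, mul_smul] at hyx
  exact hg (k + 1) k.succ_pos y hy (smul_left_cancel _ hyx ▸ hx)

theorem IsWandering.conj {c r : G} {D : Set α} (hr : IsWandering r (c⁻¹ • D)) :
    IsWandering (c * r * c⁻¹) D := by
  intro k hk x hx hmem
  rw [conj_pow, mul_smul, mul_smul, ← Set.mem_inv_smul_set_iff] at hmem
  exact hr k hk _ (Set.mem_inv_smul_set_iff.2 (by rwa [smul_inv_smul])) hmem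

end Wandering

namespace SO

theorem smul_def {n : ℕ} (g : SO n) (v : Fin n → ℝ) :
    g • v = ((g : Matrix.orthogonalGroup (Fin n) ℝ) : Matrix (Fin n) (Fin n) ℝ) *ᵥ v :=
  rfl

theorem smul_mem_sphereSet {n : ℕ} (g : SO (n + 1)) {x : Fin (n + 1) → ℝ}
    (hx : x ∈ SphereSet n) : g • x ∈ SphereSet n := by
  have hg :=
    (Matrix.mem_orthogonalGroup_iff' _ _).1 (g : Matrix.orthogonalGroup (Fin (n + 1)) ℝ).2
  have hnorm (y : Fin (n + 1) → ℝ) : ∑ i, y i ^ 2 = y ⬝ᵥ y := by simp [dotProduct, sq]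
  simp only [SphereSet, Set.mem_ofPred_eq, hnorm] at hx ⊢
  rw [smul_def, dotProduct_mulVec, ← Matrix.mulVec_transpose, Matrix.mulVec_mulVec, hg,
    Matrix.one_mulVec, hx]

def ofMatrix (M : Matrix (Fin 3) (Fin 3) ℝ) (hM : M * Mᵀ = 1) (hdet : M.det = 1) : SO 3 :=
  ⟨⟨M, (Matrix.mem_orthogonalGroup_iff _ _).2 hM⟩, hdet⟩

theorem ofMatrix_smul (M : Matrix (Fin 3) (Fin 3) ℝ) (hM : M * Mᵀ = 1) (hdet : M.det = 1)
    (v : Fin 3 → ℝ) : ofMatrix M hM hdet • v = M *ᵥ v :=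
  rfl

end SO

noncomputable def rotZ : AddChar ℝ (SO 3) where
  toFun θ := SO.ofMatrix !![cos θ, -sin θ, 0; sin θ, cos θ, 0; 0, 0, 1]
    (by
      ext i j
      fin_cases i <;> fin_cases j <;> simp [Matrix.mul_apply, Fin.sum_univ_three, ← sq] <;> ring)
    (by simp [Matrix.det_fin_three, ← sq])
  map_zero_eq_one' := by
    ext i j
    fin_cases i <;> fin_cases j <;> simp [SO.ofMatrix]
  map_add_eq_mul' α β := by
    ext i j
    fin_cases i <;> fin_cases j <;> simp [SO.ofMatrix, cos_add, sin_add] <;> ring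

theorem rotZ_smul (θ : ℝ) (u : Fin 3 → ℝ) :
    rotZ θ • u = ![cos θ * u 0 - sin θ * u 1, sin θ * u 0 + cos θ * u 1, u 2] := by
  ext i
  fin_cases i <;> simp [rotZ, SO.ofMatrix_smul, Matrix.mulVec, dotProduct, Fin.sum_univ_three]
  ring

theorem cos_eq_one_of_rotZ_smul_eq_self {u : Fin 3 → ℝ} (hu : u 0 ≠ 0 ∨ u 1 ≠ 0) {φ : ℝ}
    (h : rotZ φ • u = u) : cos φ = 1 := by
  have h0 := congrFun h 0
  have h1 := congrFun h 1
  simp only [rotZ_smul, Matrix.cons_val_zero, Matrix.cons_val_one] at h0 h1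
  -- The fixed-point equations give `((cos φ - 1)² + sin² φ) u = 2 (1 - cos φ) u = 0`.
  have hc0 : (cos φ - 1) * u 0 = 0 := by
    linear_combination (-(cos φ - 1) / 2) * h0 - (sin φ / 2) * h1 +
      (u 0 / 2) * sin_sq_add_cos_sq φ
  have hc1 : (cos φ - 1) * u 1 = 0 := by
    linear_combination (sin φ / 2) * h0 - ((cos φ - 1) / 2) * h1 +
      (u 1 / 2) * sin_sq_add_cos_sq φ
  rcases hu with hu | hu
  · linarith [(mul_eq_zero.1 hc0).resolve_right hu]
  · linarith [(mul_eq_zero.1 hc1).resolve_right hu]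

theorem countable_setOf_rotZ_smul_eq {u : Fin 3 → ℝ} (hu : u 0 ≠ 0 ∨ u 1 ≠ 0)
    (v : Fin 3 → ℝ) : {θ | rotZ θ • u = v}.Countable := by
  rcases Set.eq_empty_or_nonempty {θ | rotZ θ • u = v} with h | ⟨θ₀, hθ₀⟩
  · simp [h]
  refine (Set.countable_range fun n : ℤ => θ₀ + n * (2 * π)).mono fun θ hθ => ?_
  have hfix : rotZ (θ - θ₀) • u = u := by
    rw [sub_eq_neg_add, AddChar.map_add_eq_mul, mul_smul, Set.mem_ofPred.1 hθ,
      ← Set.mem_ofPred.1 hθ₀, AddChar.map_neg_eq_inv, inv_smul_smul]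
  obtain ⟨n, hn⟩ := (cos_eq_one_iff _).1 (cos_eq_one_of_rotZ_smul_eq_self hu hfix)
  exact ⟨n, by linarith⟩

theorem countable_setOf_rotZ_pow_smul_eq {u : Fin 3 → ℝ} (hu : u 0 ≠ 0 ∨ u 1 ≠ 0)
    (v : Fin 3 → ℝ) {k : ℕ} (hk : 0 < k) : {θ | rotZ θ ^ k • u = v}.Countable := by
  simp_rw [← AddChar.map_nsmul_eq_pow]
  exact (countable_setOf_rotZ_smul_eq hu v).preimage (smul_right_injective ℝ hk.ne')

theorem exists_isWandering_rotZ {D : Set (Fin 3 → ℝ)} (hDc : D.Countable)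
    (hD : ∀ u ∈ D, u 0 ≠ 0 ∨ u 1 ≠ 0) : ∃ θ, IsWandering (rotZ θ) D := by
  obtain ⟨θ, hθ⟩ := Set.Countable.exists_notMem <|
    (Set.to_countable {k : ℕ | 0 < k}).biUnion fun k hk => hDc.biUnion fun u hu =>
      hDc.biUnion fun v _ => countable_setOf_rotZ_pow_smul_eq (hD u hu) v hk
  exact ⟨θ, fun k hk u hu hv =>
    hθ (Set.mem_biUnion hk (Set.mem_biUnion hu (Set.mem_biUnion hv rfl)))⟩

noncomputable def coordCycle : SO 3 :=
  SO.ofMatrix !![0, 0, 1; 1, 0, 0; 0, 1, 0]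
    (by ext i j; fin_cases i <;> fin_cases j <;> simp [Matrix.mul_apply, Fin.sum_univ_three])
    (by simp [Matrix.det_fin_three])

theorem coordCycle_smul (u : Fin 3 → ℝ) : coordCycle • u = ![u 2, u 0, u 1] := by
  ext i
  fin_cases i <;>
    simp [coordCycle, SO.ofMatrix_smul, Matrix.mulVec, dotProduct, Fin.sum_univ_three]

theorem eq_or_eq_neg_of_mem_sphereSet {u : Fin 3 → ℝ} (hu : u ∈ SphereSet 2) (h0 : u 0 = 0)
    (h1 : u 1 = 0) : u = ![0, 0, 1] ∨ u = ![0, 0, -1] := by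
  have hu2 : u 2 * u 2 = 1 := by simpa [SphereSet, Fin.sum_univ_three, h0, h1, sq] using hu
  rcases mul_self_eq_one_iff.1 hu2 with h2 | h2
  · left
    ext i; fin_cases i <;> simp [h0, h1, h2]
  · right
    ext i; fin_cases i <;> simp [h0, h1, h2]

theorem exists_inv_smul_off_zAxis {D : Set (Fin 3 → ℝ)} (hD : D ⊆ SphereSet 2)
    (hDc : D.Countable) : ∃ h : SO 3, ∀ u ∈ h⁻¹ • D, u 0 ≠ 0 ∨ u 1 ≠ 0 := by
  -- The rotation `rotZ α * coordCycle` maps `±e₃` to `rotZ α • (±e₁)`.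
  obtain ⟨α, hα⟩ := Set.Countable.exists_notMem <|
    hDc.biUnion fun v _ => (countable_setOf_rotZ_smul_eq (u := ![1, 0, 0]) (by simp) v).union
      (countable_setOf_rotZ_smul_eq (u := ![-1, 0, 0]) (by simp) v)
  refine ⟨rotZ α * coordCycle, fun u hu => ?_⟩
  rw [Set.mem_inv_smul_set_iff] at hu
  by_contra! hu0
  have hu_sphere : u ∈ SphereSet 2 :=
    inv_smul_smul (rotZ α * coordCycle) u ▸ SO.smul_mem_sphereSet _ (hD hu)
  rcases eq_or_eq_neg_of_mem_sphereSet hu_sphere hu0.1 hu0.2 with rfl | rfl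
  · refine hα (Set.mem_biUnion hu (Or.inl ?_))
    simp [mul_smul, coordCycle_smul]
  · refine hα (Set.mem_biUnion hu (Or.inr ?_))
    simp [mul_smul, coordCycle_smul]

/-- For every countable subset `D` of the unit sphere `S² ⊆ ℝ³` there is a rotation
`g ∈ SO(3)` whose iterated images of `D` are pairwise disjoint. -/
theorem exists_rotation_iterates_disjoint (D : Set (Fin 3 → ℝ))
    (hD : D ⊆ SphereSet 2) (hDc : D.Countable) :
    ∃ g : SO 3, ∀ m n : ℕ, m ≠ n → Disjoint ((g ^ m) • D) ((g ^ n) • D) := by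
  obtain ⟨h, hh⟩ := exists_inv_smul_off_zAxis hD hDc
  obtain ⟨θ, hθ⟩ := exists_isWandering_rotZ (hDc.image _) hh
  exact ⟨h * rotZ θ * h⁻¹, fun m n hmn => hθ.conj.disjoint_pow_smul hmn⟩
end
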